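/- Let (U, u₀, F, δ_u, δ_r) be a simple reward machine over a finite set of propositional symbols P, with alphabet Σ = 2^P. For a word w = σ₀σ₁…σ_{n-1} ∈ Σ*, say the run of the machine on w stays in U if the states u₀, u₁, …, u_{n-1} defined by u_{t+1} = δ_u(u_t, σ_t) all lie in U (so that δ_u is applied at every step). Then for every real number c, the set of nonempty words w·σ ∈ Σ* such that the run on w stays in U and δ_r(u_w, σ) = c, where u_w is the state reached after reading w, is a regular language over Σ. Hence the per-step reward emitted by a simple reward machine distinguishes label histories only through membership in finitely many regular languages. -/
import Mathlib

def rmReach {P U F : Type*} (δu : U → Finset P → U ⊕ F) :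
    U → List (Finset P) → Option U
  | u, [] => some u
  | u, σ :: rest =>
    match δu u σ with
    | Sum.inl v => rmReach δu v rest
    | Sum.inr _ => none

open scoped Classical

section aux
variable {P U F : Type*} (δu : U → Finset P → U ⊕ F) (δr : U → Finset P → ℝ) (c : ℝ)

/-- The DFA tracking the run of the machine and whether the last step emitted reward `c`. -/
noncomputable def rmDFA (u₀ : U) : DFA (Finset P) (Option U × Bool) where
  step := fun s σ =>
    match s.1 with
    | none => (none, false)
    | some u =>
      ((match δu u σ with | Sum.inl v => some v | Sum.inr _ => none),
        decide (δr u σ = c))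
  start := (some u₀, false)
  accept := {s | s.2 = true}

lemma rmDFA_dead (u₀ : U) (b : Bool) : ∀ w : List (Finset P),
    (rmDFA δu δr c u₀).evalFrom (none, b) w = (none, if w = [] then b else false)
  | [] => rfl
  | σ :: rest => by
      have : (rmDFA δu δr c u₀).evalFrom (none, b) (σ :: rest)
          = (rmDFA δu δr c u₀).evalFrom (none, false) rest := rfl
      rw [this, rmDFA_dead]
      simp

lemma rmDFA_spec (u₀ : U) : ∀ (w : List (Finset P)) (u : U) (b : Bool),
    (rmDFA δu δr c u₀).evalFrom (some u, b) w
      = (rmReach δu u w,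
          decide ((w = [] ∧ b = true) ∨
            ∃ w' σ v, w = w' ++ [σ] ∧ rmReach δu u w' = some v ∧ δr v σ = c))
  | [], u, b => by
      simp [rmReach, DFA.evalFrom]
  | σ :: rest, u, b => by
      have hstep : (rmDFA δu δr c u₀).evalFrom (some u, b) (σ :: rest)
          = (rmDFA δu δr c u₀).evalFrom
              ((match δu u σ with | Sum.inl v => some v | Sum.inr _ => none),
                decide (δr u σ = c)) rest := rfl
      rw [hstep]
      cases h : δu u σ with
      | inl v =>
          simp only [h]
          rw [rmDFA_spec u₀ rest v]
          refine Prod.ext ?_ ?_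
          · simp [rmReach, h]
          · simp only [decide_eq_decide]
            constructor
            · rintro (⟨rfl, hb⟩ | ⟨w', σ', v', rfl, hr, hc⟩)
              · right
                exact ⟨[], σ, u, rfl, rfl, of_decide_eq_true hb⟩
              · right
                refine ⟨σ :: w', σ', v', rfl, ?_, hc⟩
                simp [rmReach, h, hr]
            · rintro (⟨h1, h2⟩ | ⟨w', σ', v', he, hr, hc⟩)
              · exact absurd h1 (by simp)
              · cases w' with
                | nil =>
                    simp at he
                    obtain ⟨rfl, rfl⟩ := he
                    simp [rmReach] at hr
                    subst hr
                    exact Or.inl ⟨rfl, decide_eq_true hc⟩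
                | cons τ w'' =>
                    simp at he
                    obtain ⟨rfl, rfl⟩ := he
                    simp [rmReach, h] at hr
                    exact Or.inr ⟨w'', σ', v', rfl, hr, hc⟩
      | inr f =>
          simp only [h]
          rw [rmDFA_dead]
          refine Prod.ext ?_ ?_
          · simp [rmReach, h]
          · simp only []
            by_cases hrest : rest = []
            · subst hrest
              simp only [if_true, decide_eq_decide]
              constructor
              · intro hc
                right
                exact ⟨[], σ, u, rfl, rfl, hc⟩
              · rintro (⟨h1, h2⟩ | ⟨w', σ', v', he, hr, hc⟩)
                · exact absurd h1 (by simp)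
                · cases w' with
                  | nil =>
                      simp at he
                      obtain ⟨rfl, rfl⟩ := he
                      simp [rmReach] at hr
                      subst hr
                      exact hc
                  | cons τ w'' =>
                      simp at he
            · rw [if_neg hrest]
              symm
              simp only [decide_eq_false_iff_not]
              rintro (⟨h1, _⟩ | ⟨w', σ', v', he, hr, hc⟩)
              · simp at h1
              · cases w' with
                | nil =>
                    simp at he
                    exact hrest he.2
                | cons τ w'' =>
                    simp at he
                    obtain ⟨rfl, rfl⟩ := he
                    simp [rmReach, h] at hr
end aux

/-- **Simple reward machines distinguish histories only via regular languages.**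
For a simple reward machine `(U, u₀, F, δu, δr)` over a finite set of propositional
symbols `P` with alphabet `Σ = 2^P`, for every real number `c`, the set of nonempty
words `w·σ` such that the run of the machine on `w` stays in `U` and the reward
`δr(u_w, σ)` emitted at the state `u_w` reached after reading `w` equals `c` is a
regular language over `Σ`. -/
theorem simple_rm_reward_level_sets_regular
    {P U F : Type*} [Fintype P] [DecidableEq P] [Fintype U] [Fintype F]
    (u₀ : U) (δu : U → Finset P → U ⊕ F) (δr : U → Finset P → ℝ)
    (c : ℝ) :
    Language.IsRegular
      {l : List (Finset P) |
        ∃ (w : List (Finset P)) (σ : Finset P) (u : U),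
          l = w ++ [σ] ∧ rmReach δu u₀ w = some u ∧ δr u σ = c} := by
  refine ⟨Option (Fin (Fintype.card U)) × Bool, inferInstance,
    DFA.reindex ((Equiv.optionCongr (Fintype.equivFin U)).prodCongr (Equiv.refl Bool))
      (rmDFA δu δr c u₀), ?_⟩
  rw [DFA.accepts_reindex]
  ext l
  rw [DFA.mem_accepts]
  show (rmDFA δu δr c u₀).evalFrom (some u₀, false) l ∈ _ ↔ _
  rw [rmDFA_spec]
  simp only [rmDFA, Set.mem_setOf_eq, decide_eq_true_eq]
  constructor
  · rintro (⟨_, h⟩ | ⟨w', σ, v, hl, hr, hc⟩)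
    · exact absurd h (by simp)
    · exact ⟨w', σ, v, hl, hr, hc⟩
  · rintro ⟨w', σ, v, hl, hr, hc⟩
    exact Or.inr ⟨w', σ, v, hl, hr, hc⟩
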